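/- Let T > 0, C > 0 and α₁ > 0, and define g(x) := x + x^{3/2} for x ≥ 0 and G(x) := log(1 + 1/√x) for x > 0. Suppose e, d : [0, T) → [0, ∞) are continuous, e is continuously differentiable, and e′(t) + d(t) ≤ C·g(e(t)) for all t ∈ (0, T). Suppose 0 ≤ t₁ < t₂ < T satisfy e(t₁) ≤ α₁ and t₂ − t₁ ≤ min(1, G(α₁))/C. Then for every m > 0 satisfying G(m) = G(α₁)/2, one has e(t) ≤ m for all t ∈ [t₁, t₂], and ∫_{t₁}^{t₂} d(s) ds ≤ α₁ + g(m). -/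

import Mathlib

/-!
Since `G' = -1 / (2 g)`, the inequality `e' ≤ e' + d ≤ C g(e)` makes `-2 G(e(t)) - C t`
nonincreasing wherever `e > 0`. If `e(t) > m > α₁`, run this from the last time `σ ≤ t` with
`e(σ) = α₁`: then `2 G(e(t)) ≥ 2 G(α₁) - C (t - σ) ≥ G(α₁) = 2 G(m)`, contradicting that `G` is
strictly decreasing. Integrating `e' + d ≤ C g(e)` over `[t₁, t₂]` and using `e ≤ m` then gives
`∫ d ≤ e(t₁) - e(t₂) + C (t₂ - t₁) g(m) ≤ α₁ + g(m)`.
-/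

/-- `g(x) = x + x^{3/2}`. -/
noncomputable def gBihari (x : ℝ) : ℝ := x + x ^ ((3 : ℝ) / 2)

/-- `G(x) = log(1 + 1/√x)`. -/
noncomputable def GBihari (x : ℝ) : ℝ := Real.log (1 + 1 / Real.sqrt x)

open Set MeasureTheory

lemma gBihari_nonneg {x : ℝ} (hx : 0 ≤ x) : 0 ≤ gBihari x :=
  add_nonneg hx (Real.rpow_nonneg hx _)

lemma gBihari_pos {x : ℝ} (hx : 0 < x) : 0 < gBihari x :=
  add_pos hx (Real.rpow_pos_of_pos hx _)

lemma gBihari_le_gBihari {x y : ℝ} (hx : 0 ≤ x) (hxy : x ≤ y) : gBihari x ≤ gBihari y :=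
  add_le_add hxy (Real.rpow_le_rpow hx hxy (by norm_num))

lemma continuous_gBihari : Continuous gBihari :=
  continuous_id.add (Real.continuous_rpow_const (by norm_num))

lemma GBihari_pos {x : ℝ} (hx : 0 < x) : 0 < GBihari x :=
  Real.log_pos (lt_add_of_pos_right 1 (by positivity))

lemma GBihari_strictAntiOn : StrictAntiOn GBihari (Ioi 0) := by
  intro x (hx : 0 < x) y _ hxy
  have hx' : 0 < Real.sqrt x := Real.sqrt_pos.2 hx
  have hy : 0 < Real.sqrt y := Real.sqrt_pos.2 (hx.trans hxy)
  refine Real.log_lt_log (by positivity) ?_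
  gcongr

lemma hasDerivAt_GBihari {x : ℝ} (hx : 0 < x) :
    HasDerivAt GBihari (-(2 * gBihari x)⁻¹) x := by
  have hs : 0 < Real.sqrt x := Real.sqrt_pos.2 hx
  have hinv : HasDerivAt (fun y => 1 + 1 / Real.sqrt y)
      (-(1 / (2 * Real.sqrt x)) / Real.sqrt x ^ 2) x := by
    simpa only [one_div] using ((Real.hasDerivAt_sqrt hx.ne').fun_inv hs.ne').const_add 1
  refine (hinv.log (by positivity)).congr_deriv ?_
  have hrpow : x ^ ((3 : ℝ) / 2) = x * Real.sqrt x := by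
    rw [show (3 : ℝ) / 2 = 1 + 1 / 2 by norm_num, Real.rpow_add hx, Real.rpow_one,
      ← Real.sqrt_eq_rpow]
  rw [gBihari, hrpow]
  field_simp
  rw [Real.sq_sqrt hx.le]
  ring

lemma GBihari_sub_le_of_deriv_le {e e' : ℝ → ℝ} {C a b : ℝ} (hab : a ≤ b)
    (he : ContinuousOn e (Icc a b)) (hpos : ∀ s ∈ Icc a b, 0 < e s)
    (hderiv : ∀ s ∈ Ioo a b, HasDerivAt e (e' s) s)
    (hle : ∀ s ∈ Ioo a b, e' s ≤ C * gBihari (e s)) :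
    2 * (GBihari (e a) - GBihari (e b)) ≤ C * (b - a) := by
  have hcomp : ∀ s ∈ Ioo a b,
      HasDerivAt (fun s => -2 * GBihari (e s)) (e' s / gBihari (e s)) s := by
    intro s hs
    have hg := gBihari_pos (hpos s (Ioo_subset_Icc_self hs))
    refine (((hasDerivAt_GBihari (hpos s (Ioo_subset_Icc_self hs))).comp s
      (hderiv s hs)).const_mul (-2)).congr_deriv ?_
    field_simp
  have hcont : ContinuousOn (fun s => -2 * GBihari (e s)) (Icc a b) := fun s hs =>
    ((hasDerivAt_GBihari (hpos s hs)).continuousAt.comp_continuousWithinAt (he s hs)).const_mul _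
  have hslope := (convex_Icc a b).image_sub_le_mul_sub_of_deriv_le hcont
    (fun s hs => by
      rw [interior_Icc] at hs
      exact (hcomp s hs).differentiableAt.differentiableWithinAt)
    (fun s hs => by
      rw [interior_Icc] at hs
      rw [(hcomp s hs).deriv, div_le_iff₀ (gBihari_pos (hpos s (Ioo_subset_Icc_self hs)))]
      exact hle s hs)
    a (left_mem_Icc.2 hab) b (right_mem_Icc.2 hab) hab
  linarith

lemma exists_last_eq_of_le_of_lt {f : ℝ → ℝ} {a b c : ℝ} (hab : a ≤ b)
    (hf : ContinuousOn f (Icc a b)) (ha : f a ≤ c) (hb : c < f b) :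
    ∃ σ ∈ Ico a b, f σ = c ∧ ∀ s ∈ Icc σ b, c ≤ f s := by
  set S := Icc a b ∩ f ⁻¹' Iic c
  have hS : IsClosed S := hf.preimage_isClosed_of_isClosed isClosed_Icc isClosed_Iic
  have hSbdd : BddAbove S := ⟨b, fun s hs => hs.1.2⟩
  have hσ : sSup S ∈ S := hS.csSup_mem ⟨a, ⟨left_mem_Icc.2 hab, ha⟩⟩ hSbdd
  have hσb : sSup S < b := lt_of_le_of_ne hσ.1.2 (by rintro h; exact hb.not_ge (h ▸ hσ.2))
  -- `f > c` on `(σ, b]` by maximality of `σ = sup S`, hence `f ≥ c` on the closure `[σ, b]`.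
  have hgt : Ioc (sSup S) b ⊆ Icc (sSup S) b ∩ f ⁻¹' Ici c := fun s hs =>
    ⟨Ioc_subset_Icc_self hs, show c ≤ f s from le_of_not_ge fun h =>
      (le_csSup hSbdd ⟨⟨hσ.1.1.trans hs.1.le, hs.2⟩, h⟩).not_gt hs.1⟩
  have hclosed : IsClosed (Icc (sSup S) b ∩ f ⁻¹' Ici c) :=
    (hf.mono (Icc_subset_Icc_left hσ.1.1)).preimage_isClosed_of_isClosed isClosed_Icc isClosed_Ici
  have hge : Icc (sSup S) b ⊆ Icc (sSup S) b ∩ f ⁻¹' Ici c := by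
    simpa only [closure_Ioc hσb.ne] using hclosed.closure_subset_iff.2 hgt
  exact ⟨sSup S, ⟨hσ.1.1, hσb⟩, le_antisymm hσ.2 (hge (left_mem_Icc.2 hσb.le)).2,
    fun s hs => (hge hs).2⟩

lemma le_of_deriv_le_mul_gBihari {e e' : ℝ → ℝ} {C α m a b : ℝ} (hC : 0 ≤ C) (hα : 0 < α)
    (he : ContinuousOn e (Icc a b)) (hderiv : ∀ s ∈ Ioo a b, HasDerivAt e (e' s) s)
    (hle : ∀ s ∈ Ioo a b, e' s ≤ C * gBihari (e s)) (ha : e a ≤ α)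
    (hgap : C * (b - a) ≤ GBihari α) (hm : 0 < m) (hGm : GBihari m = GBihari α / 2) :
    ∀ t ∈ Icc a b, e t ≤ m := by
  intro t ht
  by_contra! hmt
  have hαm : α < m :=
    (GBihari_strictAntiOn.lt_iff_gt hm hα).1 (by linarith [GBihari_pos hα])
  obtain ⟨σ, hσ, heσ, hge⟩ := exists_last_eq_of_le_of_lt ht.1
    (he.mono (Icc_subset_Icc_right ht.2)) ha (hαm.trans hmt)
  have hσt : Icc σ t ⊆ Icc a b := Icc_subset_Icc hσ.1 ht.2
  have hgrowth := GBihari_sub_le_of_deriv_le hσ.2.le (he.mono hσt)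
    (fun s hs => hα.trans_le (hge s hs))
    (fun s hs => hderiv s (Ioo_subset_Ioo hσ.1 ht.2 hs))
    (fun s hs => hle s (Ioo_subset_Ioo hσ.1 ht.2 hs))
  have hCt : C * (t - σ) ≤ C * (b - a) := by gcongr <;> linarith [ht.2, hσ.1]
  have hGt : GBihari (e t) < GBihari m :=
    GBihari_strictAntiOn hm (hm.trans hmt) hmt
  rw [heσ] at hgrowth
  linarith

lemma integral_le_sub_add_integral_of_deriv_add_le {e e' d F : ℝ → ℝ} {a b : ℝ} (hab : a ≤ b)
    (he : ContinuousOn e (Icc a b)) (hderiv : ∀ x ∈ Ioo a b, HasDerivAt e (e' x) x)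
    (hd : IntegrableOn d (Icc a b)) (hF : IntegrableOn F (Icc a b))
    (h : ∀ x ∈ Ioo a b, e' x + d x ≤ F x) :
    ∫ x in a..b, d x ≤ e a - e b + ∫ x in a..b, F x := by
  have hFTC := intervalIntegral.sub_le_integral_of_hasDeriv_right_of_le
    (φ := fun x => F x - d x) hab he
    (fun x hx => (hderiv x hx).hasDerivWithinAt) (hF.sub hd)
    (fun x hx => le_sub_iff_add_le.2 (h x hx))
  rw [intervalIntegral.integral_sub ((intervalIntegrable_iff_integrableOn_Icc_of_le hab).2 hF)
    ((intervalIntegrable_iff_integrableOn_Icc_of_le hab).2 hd)] at hFTC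
  linarith

lemma integral_le_of_deriv_add_le_mul_gBihari {e e' d : ℝ → ℝ} {C m a b : ℝ} (hC : 0 ≤ C)
    (hab : a ≤ b) (he : ContinuousOn e (Icc a b)) (he_nonneg : ∀ s ∈ Icc a b, 0 ≤ e s)
    (hderiv : ∀ s ∈ Ioo a b, HasDerivAt e (e' s) s) (hd : IntegrableOn d (Icc a b))
    (hode : ∀ s ∈ Ioo a b, e' s + d s ≤ C * gBihari (e s)) (hbound : ∀ s ∈ Icc a b, e s ≤ m)
    (hgap : C * (b - a) ≤ 1) :
    ∫ s in a..b, d s ≤ e a + gBihari m := by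
  have hge : ContinuousOn (fun s => C * gBihari (e s)) (Icc a b) :=
    continuousOn_const.mul (continuous_gBihari.comp_continuousOn he)
  have hgm : 0 ≤ gBihari m :=
    gBihari_nonneg ((he_nonneg a (left_mem_Icc.2 hab)).trans (hbound a (left_mem_Icc.2 hab)))
  calc ∫ s in a..b, d s ≤ e a - e b + ∫ s in a..b, C * gBihari (e s) :=
        integral_le_sub_add_integral_of_deriv_add_le hab he hderiv hd hge.integrableOn_Icc hode
    _ ≤ e a + ∫ _ in a..b, C * gBihari m := by
        gcongr ?_ + ?_
        · linarith [he_nonneg b (right_mem_Icc.2 hab)]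
        · exact intervalIntegral.integral_mono_on hab (hge.intervalIntegrable_of_Icc hab)
            intervalIntegrable_const fun s hs =>
              mul_le_mul_of_nonneg_left (gBihari_le_gBihari (he_nonneg s hs) (hbound s hs)) hC
    _ = e a + C * (b - a) * gBihari m := by
        rw [intervalIntegral.integral_const, smul_eq_mul]; ring
    _ ≤ e a + gBihari m := by
        gcongr
        exact mul_le_of_le_one_left hgm hgap

theorem bihari_local_in_time_general (T C α₁ : ℝ) (hC : 0 < C) (hα₁ : 0 < α₁)
    (e d e' : ℝ → ℝ)
    (he_cont : ContinuousOn e (Set.Ico 0 T))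
    (hd_cont : ContinuousOn d (Set.Ico 0 T))
    (he_nonneg : ∀ t ∈ Set.Ico (0 : ℝ) T, 0 ≤ e t)
    (hd_nonneg : ∀ t ∈ Set.Ico (0 : ℝ) T, 0 ≤ d t)
    (he_deriv : ∀ t ∈ Set.Ico (0 : ℝ) T, HasDerivWithinAt e (e' t) (Set.Ico 0 T) t)
    (hode : ∀ t ∈ Set.Ioo (0 : ℝ) T, e' t + d t ≤ C * gBihari (e t))
    (t₁ t₂ : ℝ) (ht₁ : 0 ≤ t₁) (ht₁₂ : t₁ < t₂) (ht₂ : t₂ < T)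
    (he_t₁ : e t₁ ≤ α₁)
    (hgap : t₂ - t₁ ≤ min 1 (GBihari α₁) / C) :
    ∀ m, 0 < m → GBihari m = GBihari α₁ / 2 →
      (∀ t ∈ Set.Icc t₁ t₂, e t ≤ m) ∧
        (∫ s in t₁..t₂, d s) ≤ α₁ + gBihari m := by
  intro m hm hGm
  have hsub : Icc t₁ t₂ ⊆ Ico 0 T := Icc_subset_Ico ht₁ ht₂
  have hsubIoo : Ioo t₁ t₂ ⊆ Ioo 0 T := Ioo_subset_Ioo ht₁ ht₂.le
  have hderiv : ∀ s ∈ Ioo t₁ t₂, HasDerivAt e (e' s) s := fun s hs =>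
    (he_deriv s (Ioo_subset_Ico_self (hsubIoo hs))).hasDerivAt
      (Ico_mem_nhds (hsubIoo hs).1 (hsubIoo hs).2)
  have hCgap : C * (t₂ - t₁) ≤ min 1 (GBihari α₁) := by
    rwa [le_div_iff₀ hC, mul_comm] at hgap
  have hbound : ∀ t ∈ Icc t₁ t₂, e t ≤ m :=
    le_of_deriv_le_mul_gBihari hC.le hα₁ (he_cont.mono hsub) hderiv
      (fun s hs => by
        linarith [hode s (hsubIoo hs), hd_nonneg s (Ioo_subset_Ico_self (hsubIoo hs))])
      he_t₁ (hCgap.trans (min_le_right _ _)) hm hGm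
  refine ⟨hbound, ?_⟩
  calc ∫ s in t₁..t₂, d s ≤ e t₁ + gBihari m :=
        integral_le_of_deriv_add_le_mul_gBihari hC.le ht₁₂.le (he_cont.mono hsub)
          (fun s hs => he_nonneg s (hsub hs)) hderiv (hd_cont.mono hsub).integrableOn_Icc
          (fun s hs => hode s (hsubIoo hs)) hbound (hCgap.trans (min_le_left _ _))
    _ ≤ α₁ + gBihari m := by gcongr

/-- The local-in-time Bihari argument on a subinterval: if `e′(t) + d(t) ≤ C·g(e(t))`
on `(0, T)`, `e(t₁) ≤ α₁` and `t₂ − t₁ ≤ min(1, G(α₁))/C`, then for any `m > 0` with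
`G(m) = G(α₁)/2` one has `e ≤ m` on `[t₁, t₂]` and `∫_{t₁}^{t₂} d ≤ α₁ + g(m)`. -/
theorem bihari_local_in_time (T C α₁ : ℝ) (hT : 0 < T) (hC : 0 < C) (hα₁ : 0 < α₁)
    (e d e' : ℝ → ℝ)
    (he_cont : ContinuousOn e (Set.Ico 0 T))
    (hd_cont : ContinuousOn d (Set.Ico 0 T))
    (he_nonneg : ∀ t ∈ Set.Ico (0 : ℝ) T, 0 ≤ e t)
    (hd_nonneg : ∀ t ∈ Set.Ico (0 : ℝ) T, 0 ≤ d t)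
    (he_deriv : ∀ t ∈ Set.Ico (0 : ℝ) T, HasDerivWithinAt e (e' t) (Set.Ico 0 T) t)
    (he'_cont : ContinuousOn e' (Set.Ico 0 T))
    (hode : ∀ t ∈ Set.Ioo (0 : ℝ) T, e' t + d t ≤ C * gBihari (e t))
    (t₁ t₂ : ℝ) (ht₁ : 0 ≤ t₁) (ht₁₂ : t₁ < t₂) (ht₂ : t₂ < T)
    (he_t₁ : e t₁ ≤ α₁)
    (hgap : t₂ - t₁ ≤ min 1 (GBihari α₁) / C) :
    ∀ m, 0 < m → GBihari m = GBihari α₁ / 2 →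
      (∀ t ∈ Set.Icc t₁ t₂, e t ≤ m) ∧
        (∫ s in t₁..t₂, d s) ≤ α₁ + gBihari m :=
  bihari_local_in_time_general T C α₁ hC hα₁ e d e' he_cont hd_cont he_nonneg hd_nonneg he_deriv
    hode t₁ t₂ ht₁ ht₁₂ ht₂ he_t₁ hgap
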